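/- arXiv:dg-ga/9606003 — 2 statements merged into one kernel-verified Lean document; each statement's English description precedes it below -/
import Mathlib

section
/- Let real numbers n_{ab}, m_{ac} (indexed over a finite graded set with integer grading μ) satisfy: for all a, c with μ(a) − μ(c) = 2, Σ_{b: μ(b)=μ(a)−1} n_{ab} n_{bc} = 0, and for all a, d with μ(a) − μ(d) = 3, Σ_{c₁: μ(a)−μ(c₁)=1} n_{a c₁} m_{c₁ d} − Σ_{c₂: μ(c₂)−μ(d)=1} m_{a c₂} n_{c₂ d} = 0. Define on the ℝ-vector space with basis {Ωⁿ ⊗ 1_a, Ωⁿ ⊗ η_a : n ≥ 0} (graded by deg(Ωⁿ⊗η_a) = 2n + μ(a), deg(Ωⁿ⊗1_a) = 2n + 1 + μ(a)) the operator D as in the previous statement. Then D has degree −1 and D² = 0. -/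
/-!
Call a kernel `A : ι → ι → ℝ` of degree `i` if `A a b = 0` unless `μ a - μ b = i`; the product of
kernels of degrees `i` and `j` has degree `i + j`. Since `n` and `m` have degrees `1` and `2`, every
term of `D` lowers the grading by one, and `n²`, `nm - mn` have degrees `2` and `3`, so the gluing
identities, which are exactly their entries in those degrees, say `n² = 0` and `nm = mn`. These two
identities are what `D² = 0` needs: the `η → η` block of `D²` is `n²`, the `η → 1` block at a fixed
power of `Ω` is `nm - mn`, and the shift `Ωᵖ ⊗ η ↦ Ωᵖ⁻¹ ⊗ 1` anticommutes with the rest of `D`.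
-/

noncomputable section

/-- The underlying vector space of the equivariant Floer complex. -/
abbrev EqFloerSpace (ι : Type) : Type := ((ℕ × ι) ⊕ (ℕ × ι)) →₀ ℝ

/-- The grading: `deg(Ωⁿ ⊗ 1_a) = 2n + 1 + μ(a)` and `deg(Ωⁿ ⊗ η_a) = 2n + μ(a)`. -/
def degGen {ι : Type} (μ : ι → ℤ) : (ℕ × ι) ⊕ (ℕ × ι) → ℤ
  | Sum.inl (p, a) => 2 * (p : ℤ) + 1 + μ a
  | Sum.inr (p, a) => 2 * (p : ℤ) + μ a

/-- The value of the boundary operator on the generators. -/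
def Dgen {ι : Type} [Fintype ι] (n m : ι → ι → ℝ) :
    (ℕ × ι) ⊕ (ℕ × ι) → EqFloerSpace ι
  | Sum.inl (p, a) => -(∑ b : ι, n a b • Finsupp.single (Sum.inl (p, b)) (1 : ℝ))
  | Sum.inr (p, a) =>
      (∑ b : ι, n a b • Finsupp.single (Sum.inr (p, b)) (1 : ℝ)) +
      (∑ c : ι, m a c • Finsupp.single (Sum.inl (p, c)) (1 : ℝ)) -
      (match p with
        | 0 => 0
        | Nat.succ q => Finsupp.single (Sum.inl (q, a)) (1 : ℝ))

/-- The equivariant Floer boundary operator. -/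
def Dop {ι : Type} [Fintype ι] (n m : ι → ι → ℝ) :
    EqFloerSpace ι →ₗ[ℝ] EqFloerSpace ι :=
  Finsupp.linearCombination ℝ (Dgen n m)

section Degree

variable {ι R : Type*} [NonUnitalNonAssocSemiring R]

def HasDegree (μ : ι → ℤ) (i : ℤ) (A : ι → ι → R) : Prop :=
  ∀ a b, μ a - μ b ≠ i → A a b = 0

theorem hasDegree_zero (μ : ι → ℤ) (i : ℤ) : HasDegree μ i (0 : ι → ι → R) :=
  fun _ _ _ => rfl

theorem HasDegree.sum_mul [Fintype ι] {μ : ι → ℤ} {i j : ℤ} {A B : ι → ι → R}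
    (hA : HasDegree μ i A) (hB : HasDegree μ j B) :
    HasDegree μ (i + j) fun a c => ∑ b, A a b * B b c := by
  intro a c hac
  refine Finset.sum_eq_zero fun b _ => ?_
  by_cases hab : μ a - μ b = i
  · rw [hB b c (by omega), mul_zero]
  · rw [hA a b hab, zero_mul]

theorem HasDegree.eq_of_eq {μ : ι → ℤ} {i : ℤ} {A B : ι → ι → R}
    (hA : HasDegree μ i A) (hB : HasDegree μ i B)
    (h : ∀ a b, μ a - μ b = i → A a b = B a b) (a b : ι) : A a b = B a b := by
  by_cases hab : μ a - μ b = i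
  · exact h a b hab
  · rw [hA a b hab, hB a b hab]

end Degree

theorem Finset.sum_smul_sum_smul {ι R M : Type*} [Fintype ι] [Semiring R] [AddCommMonoid M]
    [Module R M] (A B : ι → ι → R) (v : ι → M) (a : ι) :
    ∑ b, A a b • ∑ c, B b c • v c = ∑ c, (∑ b, A a b * B b c) • v c := by
  simp only [Finset.smul_sum, smul_smul, Finset.sum_smul]
  exact Finset.sum_comm

theorem Finsupp.sum_smul_single_mem_supported {ι α R : Type*} [Fintype ι] [Semiring R]
    {s : Set α} (c : ι → R) (f : ι → α) (h : ∀ b, c b ≠ 0 → f b ∈ s) :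
    ∑ b, c b • Finsupp.single (f b) (1 : R) ∈ Finsupp.supported R R s := by
  refine Submodule.sum_mem _ fun b _ => ?_
  by_cases hb : c b = 0
  · rw [hb, zero_smul]
    exact Submodule.zero_mem _
  · exact Submodule.smul_mem _ _ (Finsupp.single_mem_supported R 1 (h b hb))

section EquivariantFloer

variable {ι : Type} [Fintype ι]

theorem Dop_single (n m : ι → ι → ℝ) (x : (ℕ × ι) ⊕ (ℕ × ι)) :
    Dop n m (Finsupp.single x 1) = Dgen n m x := by
  rw [Dop, Finsupp.linearCombination_single, one_smul]

theorem Dop_sum_smul_single (n m : ι → ι → ℝ) (c : ι → ℝ) (f : ι → (ℕ × ι) ⊕ (ℕ × ι)) :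
    Dop n m (∑ b, c b • Finsupp.single (f b) 1) = ∑ b, c b • Dgen n m (f b) := by
  simp only [map_sum, map_smul, Dop_single]

theorem Dgen_mem_supported {μ : ι → ℤ} {n m : ι → ι → ℝ} (hn : HasDegree μ 1 n)
    (hm : HasDegree μ 2 m) (x : (ℕ × ι) ⊕ (ℕ × ι)) :
    Dgen n m x ∈ Finsupp.supported ℝ ℝ {y | degGen μ y = degGen μ x - 1} := by
  have row {i : ℤ} {A : ι → ι → ℝ} (hA : HasDegree μ i A) (a : ι)
      (f : ι → (ℕ × ι) ⊕ (ℕ × ι)) (hf : ∀ b, μ a - μ b = i → degGen μ (f b) = degGen μ x - 1) :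
      ∑ b, A a b • Finsupp.single (f b) 1 ∈ Finsupp.supported ℝ ℝ {y | degGen μ y = degGen μ x - 1} :=
    Finsupp.sum_smul_single_mem_supported _ _ fun b hb => hf b (not_not.mp (mt (hA a b) hb))
  rcases x with ⟨p, a⟩ | ⟨p, a⟩
  · refine Submodule.neg_mem _ (row hn a _ fun b hb => ?_)
    simp only [degGen]
    omega
  · refine Submodule.sub_mem _ (Submodule.add_mem _
      (row hn a _ fun b hb => by simp only [degGen]; omega)
      (row hm a _ fun b hb => by simp only [degGen]; omega)) ?_
    rcases p with _ | q
    · exact Submodule.zero_mem _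
    · refine Finsupp.single_mem_supported ℝ 1 ?_
      simp only [degGen, Set.mem_ofPred_eq]
      push_cast
      ring

theorem Dop_Dgen_eq_zero {n m : ι → ι → ℝ} (hnn : ∀ a c, ∑ b, n a b * n b c = 0)
    (hnm : ∀ a d, ∑ c, n a c * m c d = ∑ c, m a c * n c d)
    (x : (ℕ × ι) ⊕ (ℕ × ι)) : Dop n m (Dgen n m x) = 0 := by
  rcases x with ⟨p, a⟩ | ⟨_ | q, a⟩
  all_goals
    simp only [Dgen, map_neg, map_add, map_sub, Dop_sum_smul_single, Dop_single,
      smul_neg, smul_add, smul_sub, Finset.sum_neg_distrib, Finset.sum_add_distrib,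
      Finset.sum_sub_distrib, Finset.sum_smul_sum_smul, hnn, hnm, zero_smul,
      Finset.sum_const_zero, sub_zero]
  all_goals abel

theorem Dop_comp_Dop_eq_zero {n m : ι → ι → ℝ} (hnn : ∀ a c, ∑ b, n a b * n b c = 0)
    (hnm : ∀ a d, ∑ c, n a c * m c d = ∑ c, m a c * n c d) :
    (Dop n m).comp (Dop n m) = 0 :=
  Finsupp.lhom_ext fun x r => by
    rw [← Finsupp.smul_single_one, LinearMap.comp_apply, map_smul, map_smul, Dop_single,
      Dop_Dgen_eq_zero hnn hnm, smul_zero, LinearMap.zero_apply]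

end EquivariantFloer

theorem equivariant_boundary_degree_and_squares_zero
    (ι : Type) [Fintype ι] (μ : ι → ℤ) (n m : ι → ι → ℝ)
    (hn : ∀ a b : ι, μ a - μ b ≠ 1 → n a b = 0)
    (hm : ∀ a c : ι, μ a - μ c ≠ 2 → m a c = 0)
    -- the gluing identities
    (hid1 : ∀ a c : ι, μ a - μ c = 2 → ∑ b : ι, n a b * n b c = 0)
    (hid2 : ∀ a d : ι, μ a - μ d = 3 →
      (∑ c : ι, n a c * m c d) - (∑ c : ι, m a c * n c d) = 0) :
    -- `D` has degree `−1` ...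
    (∀ x : (ℕ × ι) ⊕ (ℕ × ι), ∀ y ∈ (Dop n m (Finsupp.single x 1)).support,
      degGen μ y = degGen μ x - 1) ∧
    -- ... and `D² = 0`
    (Dop n m).comp (Dop n m) = 0 := by
  have hnn : ∀ a c, ∑ b, n a b * n b c = 0 :=
    (HasDegree.sum_mul hn hn).eq_of_eq (hasDegree_zero μ 2) hid1
  have hnm : ∀ a d, ∑ c, n a c * m c d = ∑ c, m a c * n c d :=
    (HasDegree.sum_mul hn hm).eq_of_eq (HasDegree.sum_mul (i := 2) (j := 1) hm hn)
      fun a d had => sub_eq_zero.mp (hid2 a d had)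
  refine ⟨fun x y hy => ?_, Dop_comp_Dop_eq_zero hnn hnm⟩
  rw [Dop_single] at hy
  exact (Finsupp.mem_supported ℝ _).mp (Dgen_mem_supported hn hm x) hy

end
end

section
/- Let D be the equivariant Floer boundary with coefficients n_{ab}, m_{ac} as above, and let Δ be defined on cycles ξ = Σ_a x_a a of odd degree 2k+1 (i.e., Σ_a x_a n_{ab} = 0 for every b of degree 2k) by Δ(ξ) = Σ x_a m_{a c} m_{c e} ⋯ m_{α′ α} n_{α θ}, where the sum is over all chains of indices with μ(a) = 2k+1, μ(c) = 2k−1, ..., μ(α) = 1 and θ of index 0. Then Δ(ξ) is independent of the choice of cycle representative within its homology class, i.e., Δ vanishes on boundaries: Δ(∂η) = 0 for every chain η of degree 2k+2, assuming the identities Σ(m_{ac} n_{cd} + n_{ab} m_{bd}) = 0 for all index pairs of relative index 3. -/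
/-!
In matrix language `Δ(x) = (x ᵥ* mᵏ n)_θ` and `∂η = η ᵥ* n`, so `Δ(∂η) = (η ᵥ* n mᵏ n)_θ`.
Because of the index constraints, the identities `D² = 0` say exactly that `n² = 0` and
`n m = -m n`. Moving `n` across `mᵏ` then gives `n mᵏ n = (-m)ᵏ n² = 0`.
-/

noncomputable section

/-- One step of the transfer matrix: `x ↦ (c ↦ Σ_a x_a m_{ac})`. -/
def mStep (ι : Type) [Fintype ι] (m : ι → ι → ℝ) (x : ι → ℝ) : ι → ℝ :=
  fun c => ∑ a : ι, x a * m a c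

/-- The connecting homomorphism on chains of degree `2k+1`:
`Δ(x) = Σ x_a m_{ac} m_{ce} ⋯ m_{α′α} n_{αθ}` (`k` factors of `m`). -/
def Delta (ι : Type) [Fintype ι] (m n : ι → ι → ℝ) (θ : ι) (k : ℕ) (x : ι → ℝ) : ℝ :=
  ∑ α : ι, ((mStep ι m)^[k] x) α * n α θ

/-- The boundary `∂(Σ_a η_a a) = Σ_{a,b} η_a n_{ab} b` on chains. -/
def bdry (ι : Type) [Fintype ι] (n : ι → ι → ℝ) (η : ι → ℝ) : ι → ℝ :=
  fun b => ∑ a : ι, η a * n a b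

open Matrix

def Matrix.LowersDegree {ι R : Type*} [Zero R] (μ : ι → ℤ) (p : ℤ) (A : Matrix ι ι R) : Prop :=
  ∀ a b, μ a - μ b ≠ p → A a b = 0

namespace Matrix.LowersDegree

variable {ι R : Type*} {μ : ι → ℤ} {p q : ℤ} {A B : Matrix ι ι R}

theorem add [AddZeroClass R] (hA : LowersDegree μ p A) (hB : LowersDegree μ p B) :
    LowersDegree μ p (A + B) := fun a b h => by
  rw [add_apply, hA a b h, hB a b h, add_zero]

theorem mul [Fintype ι] [NonUnitalNonAssocSemiring R] (hA : LowersDegree μ p A)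
    (hB : LowersDegree μ q B) : LowersDegree μ (p + q) (A * B) := fun a c hac => by
  rw [mul_apply]
  refine Finset.sum_eq_zero fun b _ => ?_
  by_cases hab : μ a - μ b = p
  · rw [hB b c (by omega), mul_zero]
  · rw [hA a b hab, zero_mul]

theorem eq_zero [Zero R] (hA : LowersDegree μ p A) (h : ∀ a b, μ a - μ b = p → A a b = 0) :
    A = 0 := by
  ext a b
  by_cases hab : μ a - μ b = p
  exacts [h a b hab, hA a b hab]

end Matrix.LowersDegree

theorem mul_pow_mul_eq_zero_of_mul_eq_neg {R : Type*} [Ring R] {n m : R} (hsq : n * n = 0)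
    (hanti : n * m = -(m * n)) (k : ℕ) : n * m ^ k * n = 0 := by
  have : SemiconjBy n m (-m) := hanti.trans (neg_mul m n).symm
  rw [(this.pow_right k).eq, mul_assoc, hsq, mul_zero]

section Delta

variable {ι : Type} [Fintype ι]

theorem mStep_eq_vecMul (m : ι → ι → ℝ) (x : ι → ℝ) : mStep ι m x = x ᵥ* of m := rfl

theorem bdry_eq_vecMul (n : ι → ι → ℝ) (η : ι → ℝ) : bdry ι n η = η ᵥ* of n := rfl

theorem mStep_iterate [DecidableEq ι] (m : ι → ι → ℝ) (k : ℕ) (x : ι → ℝ) :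
    (mStep ι m)^[k] x = x ᵥ* of m ^ k := by
  induction k with
  | zero => rw [Function.iterate_zero_apply, pow_zero, vecMul_one]
  | succ k ih => rw [Function.iterate_succ_apply', ih, mStep_eq_vecMul, vecMul_vecMul, pow_succ]

theorem Delta_eq_vecMul [DecidableEq ι] (m n : ι → ι → ℝ) (θ : ι) (k : ℕ) (x : ι → ℝ) :
    Delta ι m n θ k x = (x ᵥ* of m ^ k ᵥ* of n) θ := by
  rw [Delta, mStep_iterate]
  rfl

theorem Delta_bdry [DecidableEq ι] (m n : ι → ι → ℝ) (θ : ι) (k : ℕ) (η : ι → ℝ) :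
    Delta ι m n θ k (bdry ι n η) = (η ᵥ* (of n * of m ^ k * of n)) θ := by
  rw [Delta_eq_vecMul, bdry_eq_vecMul, vecMul_vecMul, vecMul_vecMul, mul_assoc]

end Delta

theorem connecting_hom_vanishes_on_boundaries_general
    (ι : Type) [Fintype ι] (μ : ι → ℤ) (θ : ι) (n m : ι → ι → ℝ)
    -- support conditions: `n` counts relative index 1, `m` relative index 2
    (hn : ∀ a b : ι, μ a - μ b ≠ 1 → n a b = 0)
    (hm : ∀ a c : ι, μ a - μ c ≠ 2 → m a c = 0)
    -- the `D² = 0` identities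
    (hid1 : ∀ a c : ι, μ a - μ c = 2 → ∑ b : ι, n a b * n b c = 0)
    (hid2 : ∀ a d : ι, μ a - μ d = 3 →
      (∑ c : ι, m a c * n c d) + (∑ b : ι, n a b * m b d) = 0)
    (k : ℕ) (η : ι → ℝ) :
    Delta ι m n θ k (bdry ι n η) = 0 := by
  classical
  have hn' : LowersDegree μ 1 (of n) := hn
  have hm' : LowersDegree μ 2 (of m) := hm
  have hsq : of n * of n = 0 := (hn'.mul hn').eq_zero hid1
  have hanti : of m * of n + of n * of m = 0 :=
    ((hm'.mul hn').add (hn'.mul hm')).eq_zero hid2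
  rw [Delta_bdry, mul_pow_mul_eq_zero_of_mul_eq_neg hsq (eq_neg_of_add_eq_zero_right hanti) k,
    vecMul_zero, Pi.zero_apply]

theorem connecting_hom_vanishes_on_boundaries
    (ι : Type) [Fintype ι] (μ : ι → ℤ) (θ : ι) (n m : ι → ι → ℝ)
    (hθ : μ θ = 0)
    -- support conditions: `n` counts relative index 1, `m` relative index 2
    (hn : ∀ a b : ι, μ a - μ b ≠ 1 → n a b = 0)
    (hm : ∀ a c : ι, μ a - μ c ≠ 2 → m a c = 0)
    -- the `D² = 0` identities
    (hid1 : ∀ a c : ι, μ a - μ c = 2 → ∑ b : ι, n a b * n b c = 0)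
    (hid2 : ∀ a d : ι, μ a - μ d = 3 →
      (∑ c : ι, m a c * n c d) + (∑ b : ι, n a b * m b d) = 0)
    -- any chain `η` of degree `2k+2`
    (k : ℕ) (η : ι → ℝ) (hη : ∀ a : ι, μ a ≠ 2 * (k : ℤ) + 2 → η a = 0) :
    Delta ι m n θ k (bdry ι n η) = 0 :=
  connecting_hom_vanishes_on_boundaries_general ι μ θ n m hn hm hid1 hid2 k η

end
end
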